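/- arXiv:2401.13933 — 5 statements merged into one kernel-verified Lean document; each statement's English description precedes it below -/
import Mathlib

section
/- If the exponent lattice U_λ is trivial, i.e., the only (i_1,…,i_n) ∈ ℤ^n with λ_1^{i_1}···λ_n^{i_n} = 1 is (0,…,0), then the constant field Const_σ K = {f ∈ K | σ(f) = f} equals F (the image of F inside K). -/
/-!
On polynomials, `σ` acts diagonally: `σ(x^d) = λ^d x^d`, and triviality of the exponent lattice
says exactly that the eigenvalues `λ^d` of distinct monomials are distinct. If `σ f = f`, the
polynomials `q` with `q f` a polynomial form a nonzero `σ`-stable subspace. An element of it with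
fewest monomials is an eigenvector of `σ` (else `σ q - λ^b q` would be a shorter one), hence a
monomial `x^b`. Then `x^b f` is a polynomial eigenvector with eigenvalue `λ^b`, so it is `c x^b`,
and `f = c`.
-/

open MvPolynomial

/-- `K F n` is the rational function field `F(α₁,…,αₙ)`. -/
abbrev K (F : Type*) [Field F] (n : ℕ) := FractionRing (MvPolynomial (Fin n) F)

/-- The canonical image of the variable `αᵢ` in `K F n`. -/
noncomputable def α {F : Type*} [Field F] {n : ℕ} (i : Fin n) : K F n :=
  algebraMap (MvPolynomial (Fin n) F) (K F n) (X i)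

namespace MvPolynomial

variable {ι F : Type*} [Field F] (lam : ι → F)

noncomputable def scaleFactor (d : ι →₀ ℕ) : F := d.prod fun i k => lam i ^ k

noncomputable def scaleVars : MvPolynomial ι F →ₐ[F] MvPolynomial ι F :=
  aeval fun i => C (lam i) * X i

theorem scaleVars_monomial (d : ι →₀ ℕ) (c : F) :
    scaleVars lam (monomial d c) = monomial d (scaleFactor lam d * c) := by
  rw [scaleVars, aeval_monomial, monomial_eq, scaleFactor, map_mul, map_finsuppProd]
  simp only [mul_pow, ← C_pow, Finsupp.prod_mul, algebraMap_eq]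
  ring

theorem coeff_scaleVars (d : ι →₀ ℕ) (p : MvPolynomial ι F) :
    coeff d (scaleVars lam p) = scaleFactor lam d * coeff d p := by
  classical
  induction p using MvPolynomial.induction_on' with
  | monomial e c =>
    rw [scaleVars_monomial, coeff_monomial, coeff_monomial]
    split_ifs with h
    · rw [h]
    · rw [mul_zero]
  | add p q hp hq => rw [map_add, coeff_add, coeff_add, hp, hq, mul_add]

theorem scaleFactor_injective [Fintype ι] (hlam : ∀ i, lam i ≠ 0)
    (htriv : ∀ v : ι → ℤ, ∏ i, lam i ^ v i = 1 → v = 0) :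
    Function.Injective (scaleFactor lam) := by
  intro d e h
  have hprod (d : ι →₀ ℕ) : scaleFactor lam d = ∏ i, lam i ^ d i :=
    Finsupp.prod_fintype _ _ fun _ => pow_zero _
  have hzero : (fun i => (d i : ℤ) - e i) = 0 := by
    refine htriv _ ?_
    simp_rw [zpow_sub₀ (hlam _), zpow_natCast, Finset.prod_div_distrib, ← hprod, h]
    exact div_self (Finset.prod_ne_zero_iff.2 fun i _ => pow_ne_zero _ (hlam i))
  ext i
  simpa [sub_eq_zero] using congrFun hzero i

variable {lam}

theorem eq_monomial_of_scaleVars_eq_smul (hinj : Function.Injective (scaleFactor lam))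
    {p : MvPolynomial ι F} {b : ι →₀ ℕ} (h : scaleVars lam p = scaleFactor lam b • p) :
    p = monomial b (coeff b p) := by
  classical
  ext d
  rw [coeff_monomial]
  split_ifs with hdb
  · rw [hdb]
  have hd := congrArg (coeff d) h
  rw [coeff_scaleVars, coeff_smul, smul_eq_mul, ← sub_eq_zero, ← sub_mul] at hd
  exact (mul_eq_zero.1 hd).resolve_left (sub_ne_zero.2 (hinj.ne (Ne.symm hdb)))

theorem exists_monomial_mem_of_scaleVars_mem (hinj : Function.Injective (scaleFactor lam))
    (S : Submodule F (MvPolynomial ι F)) (hS : ∀ q ∈ S, scaleVars lam q ∈ S)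
    {q : MvPolynomial ι F} (hq : q ∈ S) (hq0 : q ≠ 0) :
    ∃ b c, c ≠ 0 ∧ monomial b c ∈ S := by
  classical
  induction h : q.support.card using Nat.strong_induction_on generalizing q with
  | _ k ih =>
  obtain ⟨b, hb⟩ := support_nonempty.2 hq0
  set q' := scaleVars lam q - scaleFactor lam b • q
  have hq' : q' ∈ S := S.sub_mem (hS q hq) (S.smul_mem _ hq)
  by_cases h0 : q' = 0
  · rw [eq_monomial_of_scaleVars_eq_smul hinj (sub_eq_zero.1 h0)] at hq
    exact ⟨b, coeff b q, mem_support_iff.1 hb, hq⟩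
  have hsupp : q'.support ⊆ q.support.erase b := by
    intro d hd
    rw [mem_support_iff, coeff_sub, coeff_scaleVars, coeff_smul, smul_eq_mul, ← sub_mul] at hd
    refine Finset.mem_erase.2 ⟨fun hdb => ?_, mem_support_iff.2 (right_ne_zero_of_mul hd)⟩
    exact hd (by rw [hdb, sub_self, zero_mul])
  exact ih _ (h ▸ (Finset.card_le_card hsupp).trans_lt (Finset.card_erase_lt_of_mem hb)) hq' h0 rfl

theorem exists_algebraMap_C_eq_of_map_eq_self {L : Type*} [Field L]
    [Algebra (MvPolynomial ι F) L] [IsFractionRing (MvPolynomial ι F) L]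
    (hinj : Function.Injective (scaleFactor lam)) (σ : L →+* L)
    (hσ : ∀ r, σ (algebraMap _ L r) = algebraMap _ L (scaleVars lam r))
    {f : L} (hf : σ f = f) : ∃ c : F, algebraMap (MvPolynomial ι F) L (C c) = f := by
  set R := MvPolynomial ι F
  have hR : Function.Injective (algebraMap R L) := IsFractionRing.injective R L
  let S : Submodule F R :=
    ((1 : Submodule R L).comap (LinearMap.toSpanSingleton R L f)).restrictScalars F
  have mem_S (q : R) : q ∈ S ↔ ∃ p, algebraMap R L p = algebraMap R L q * f := by
    simp [S, Submodule.mem_one, Algebra.smul_def]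
  have hS : ∀ q ∈ S, scaleVars lam q ∈ S := by
    intro q hq
    obtain ⟨p, hp⟩ := (mem_S q).1 hq
    exact (mem_S _).2 ⟨scaleVars lam p, by rw [← hσ, hp, map_mul, hσ, hf]⟩
  obtain ⟨a, q, hq, haq⟩ := IsFractionRing.div_surjective (A := R) f
  have hq0 : q ≠ 0 := nonZeroDivisors.ne_zero hq
  have hqS : q ∈ S := (mem_S q).2 ⟨a, by
    rw [← haq, mul_div_cancel₀ _ ((map_ne_zero_iff _ hR).2 hq0)]⟩
  obtain ⟨b, c, hc, hbS⟩ := exists_monomial_mem_of_scaleVars_mem hinj S hS hqS hq0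
  obtain ⟨p, hp⟩ := (mem_S _).1 hbS
  have hpeig : scaleVars lam p = scaleFactor lam b • p := by
    apply hR
    rw [← hσ, hp, map_mul, hσ, hf, scaleVars_monomial, smul_eq_C_mul, map_mul (algebraMap R L),
      hp, ← mul_assoc, ← map_mul, C_mul_monomial]
  have hm : algebraMap R L (monomial b c) ≠ 0 :=
    (map_ne_zero_iff _ hR).2 (monomial_eq_zero.not.2 hc)
  refine ⟨coeff b p / c, mul_left_cancel₀ hm ?_⟩
  rw [← map_mul, ← hp, mul_comm, C_mul_monomial, div_mul_cancel₀ _ hc]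
  exact congrArg _ (eq_monomial_of_scaleVars_eq_smul hinj hpeig).symm

end MvPolynomial

theorem stmt_2_general {F : Type*} [Field F]
    {n : ℕ}
    (lam : Fin n → F) (hlam : ∀ i, lam i ≠ 0)
    (σ : K F n ≃ₐ[F] K F n)
    (hσ : ∀ i, σ (α i) = algebraMap F (K F n) (lam i) * α i)
    (htriv : ∀ i : Fin n → ℤ, (∏ t, lam t ^ i t) = 1 → i = 0) :
    {f : K F n | σ f = f} = Set.range (algebraMap F (K F n)) := by
  have hσ_poly : ∀ r, σ (algebraMap _ (K F n) r) = algebraMap _ (K F n) (scaleVars lam r) := by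
    let toK := IsScalarTower.toAlgHom F (MvPolynomial (Fin n) F) (K F n)
    have : (σ : K F n →ₐ[F] K F n).comp toK = toK.comp (scaleVars lam) := by
      refine algHom_ext fun i => ?_
      simp only [toK, scaleVars, AlgHom.comp_apply, aeval_X, IsScalarTower.coe_toAlgHom']
      rw [map_mul, ← algebraMap_eq, ← IsScalarTower.algebraMap_apply]
      exact hσ i
    exact fun r => AlgHom.congr_fun this r
  ext f
  refine ⟨fun hf => ?_, ?_⟩
  · obtain ⟨c, hc⟩ := exists_algebraMap_C_eq_of_map_eq_self
      (scaleFactor_injective lam hlam htriv) (σ : K F n →+* K F n) hσ_poly hf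
    exact ⟨c, by rwa [IsScalarTower.algebraMap_apply F (MvPolynomial (Fin n) F), algebraMap_eq]⟩
  · rintro ⟨c, rfl⟩
    exact σ.commutes c

/-- Let `σ` be the `F`-algebra automorphism of `K = F(α₁,…,αₙ)` with
`σ(αᵢ) = λᵢ αᵢ` (all `λᵢ ∈ F` nonzero). If the exponent lattice is trivial, i.e. the only
`(i₁,…,iₙ) ∈ ℤⁿ` with `λ₁^{i₁}⋯λₙ^{iₙ} = 1` is `0`, then the constant field
`{f ∈ K | σ(f) = f}` equals (the image of) `F`. -/
theorem stmt_2 {F : Type*} [Field F] [Algebra F (AlgebraicClosure ℚ)]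
    {n : ℕ} (hn : 1 ≤ n)
    (lam : Fin n → F) (hlam : ∀ i, lam i ≠ 0)
    (σ : K F n ≃ₐ[F] K F n)
    (hσ : ∀ i, σ (α i) = algebraMap F (K F n) (lam i) * α i)
    (htriv : ∀ i : Fin n → ℤ, (∏ t, lam t ^ i t) = 1 → i = 0) :
    {f : K F n | σ f = f} = Set.range (algebraMap F (K F n)) :=
  stmt_2_general lam hlam σ hσ htriv
end

section
/- Let m ∈ ℕ^n and let p, q ∈ F[α_1,…,α_n] be polynomials whose coefficient at the monomial α^m equals 1 and all of whose other monomials appearing with nonzero coefficient in p or q are strictly smaller than α^m in the graded lexicographic order (total degree first, ties broken lexicographically with α_1 ≻ α_2 ≻ ⋯ ≻ α_n). Writing p_i and q_i for the coefficients of p and q at a multi-index i, one has Spr_σ(p,q) = ⋂_{i} Spr_σ(α^m + p_i·α^i, α^m + q_i·α^i), where the intersection ranges over all multi-indices i ≠ m with α^i strictly smaller than α^m in the graded lexicographic order and p_i ≠ 0 or q_i ≠ 0 (an empty intersection being ℤ). -/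
/-!
Since `σ` scales every monomial `α^v` by the nonzero constant `w v = ∏ λᵢ^{vᵢ}`, `σᵏ` acts
coefficientwise: `coeff v (σᵏ f) = w vᵏ · coeff v f`. Comparing coefficients at `α^m`, where
`p` and `q` both have coefficient `1`, forces the constant in `σᵏ p = c · q` to be `w mᵏ`, so
`k ∈ Spr σ p q` amounts to `w vᵏ · p_v = w mᵏ · q_v` for every `v`. For `v ≠ m` this is exactly
the condition for `k` to lie in the spread set of the binomials `α^m + p_v α^v`, `α^m + q_v α^v`.
-/

open MvPolynomial

/-- The spread set `Spr_σ(p,q) = {k ∈ ℤ | σᵏ(p) = c·q for some c ∈ F∖{0}}`. -/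
def Spr {F : Type*} [Field F] {n : ℕ}
    (σ : MvPolynomial (Fin n) F ≃ₐ[F] MvPolynomial (Fin n) F)
    (p q : MvPolynomial (Fin n) F) : Set ℤ :=
  {k : ℤ | ∃ c : F, c ≠ 0 ∧ (σ ^ k) p = C c * q}

/-- `grlexLt i m` says that the monomial `α^i` is strictly smaller than `α^m` in the
graded lexicographic order: first compare total degrees, ties broken lexicographically
with `α₁ ≻ α₂ ≻ ⋯ ≻ αₙ` (i.e. at the first index where the exponent vectors differ,
`i` has the smaller exponent). -/
def grlexLt {n : ℕ} (i m : Fin n →₀ ℕ) : Prop :=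
  (∑ t, i t) < (∑ t, m t) ∨
  ((∑ t, i t) = (∑ t, m t) ∧ ∃ t, i t < m t ∧ ∀ s, s < t → i s = m s)

namespace MvPolynomial

variable {R ι : Type*} [CommSemiring R]

theorem apply_monomial_of_apply_X_eq_C_mul_X (σ : MvPolynomial ι R →ₐ[R] MvPolynomial ι R)
    (lam : ι → R) (hσ : ∀ i, σ (X i) = C (lam i) * X i) (v : ι →₀ ℕ) (c : R) :
    σ (monomial v c) = monomial v ((v.prod fun i e => lam i ^ e) * c) := by
  have : σ = aeval fun i => C (lam i) * X i := algHom_ext fun i => by simp [hσ]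
  simp only [this, aeval_monomial, mul_pow, Finsupp.prod_mul, ← map_pow, ← map_finsuppProd,
    algebraMap_eq, ← monomial_eq, C_mul_monomial, mul_comm c]

theorem coeff_apply_of_apply_X_eq_C_mul_X (σ : MvPolynomial ι R →ₐ[R] MvPolynomial ι R)
    (lam : ι → R) (hσ : ∀ i, σ (X i) = C (lam i) * X i) (v : ι →₀ ℕ) (f : MvPolynomial ι R) :
    coeff v (σ f) = (v.prod fun i e => lam i ^ e) * coeff v f := by
  classical
  induction f using MvPolynomial.induction_on' with
  | monomial u c =>
    rw [apply_monomial_of_apply_X_eq_C_mul_X σ lam hσ, coeff_monomial, coeff_monomial]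
    split_ifs with h
    · rw [h]
    · rw [mul_zero]
  | add f g hf hg => rw [map_add, coeff_add, coeff_add, hf, hg, mul_add]

theorem coeff_zpow_apply_of_coeff_apply (σ : MvPolynomial ι R ≃ₐ[R] MvPolynomial ι R)
    (w : (ι →₀ ℕ) → Rˣ) (hσ : ∀ v f, coeff v (σ f) = w v * coeff v f)
    (k : ℤ) (v : ι →₀ ℕ) (f : MvPolynomial ι R) :
    coeff v ((σ ^ k) f) = ↑(w v ^ k) * coeff v f := by
  have hinv : ∀ g, coeff v (σ⁻¹ g) = ↑(w v)⁻¹ * coeff v g := fun g => by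
    rw [Units.eq_inv_mul_iff_mul_eq, ← hσ, AlgEquiv.aut_inv, AlgEquiv.apply_symm_apply]
  induction k using Int.induction_on generalizing f with
  | zero => simp
  | succ k ih =>
    rw [zpow_add_one, AlgEquiv.mul_apply, ih, hσ, zpow_add_one, Units.val_mul, mul_assoc]
  | pred k ih =>
    rw [zpow_sub_one, AlgEquiv.mul_apply, ih, hinv, zpow_sub_one, Units.val_mul, mul_assoc]

end MvPolynomial

section Spread

variable {F : Type*} [Field F] {n : ℕ} {σ : MvPolynomial (Fin n) F ≃ₐ[F] MvPolynomial (Fin n) F}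
  {w : (Fin n →₀ ℕ) → Fˣ} {m : Fin n →₀ ℕ} {k : ℤ}

theorem mem_Spr_iff_of_coeff_eq_one (hσ : ∀ v f, coeff v (σ f) = w v * coeff v f)
    {p q : MvPolynomial (Fin n) F} (hpm : coeff m p = 1) (hqm : coeff m q = 1) :
    k ∈ Spr σ p q ↔ ∀ v, ↑(w v ^ k) * coeff v p = ↑(w m ^ k) * coeff v q := by
  simp only [Spr, Set.mem_ofPred_eq, MvPolynomial.ext_iff, coeff_zpow_apply_of_coeff_apply σ w hσ,
    coeff_C_mul]
  constructor
  · rintro ⟨c, -, hc⟩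
    obtain rfl : ↑(w m ^ k) = c := by simpa [hpm, hqm] using hc m
    exact hc
  · exact fun h => ⟨_, Units.ne_zero _, h⟩

theorem mem_Spr_binomial_iff (hσ : ∀ v f, coeff v (σ f) = w v * coeff v f)
    {v : Fin n →₀ ℕ} (hvm : v ≠ m) (a b : F) :
    k ∈ Spr σ (monomial m 1 + monomial v a) (monomial m 1 + monomial v b) ↔
      ↑(w v ^ k) * a = ↑(w m ^ k) * b := by
  classical
  have hcoeff_m (c : F) : coeff m (monomial m 1 + monomial v c) = 1 := by
    simp [coeff_monomial, hvm]
  rw [mem_Spr_iff_of_coeff_eq_one hσ (hcoeff_m a) (hcoeff_m b)]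
  refine ⟨fun h => by simpa [coeff_monomial, hvm.symm] using h v, fun h u => ?_⟩
  by_cases hum : u = m
  · rw [hum, hcoeff_m, hcoeff_m]
  by_cases huv : u = v
  · simpa [coeff_monomial, huv, hvm.symm] using h
  · simp [coeff_monomial, Ne.symm hum, Ne.symm huv]

end Spread

theorem stmt_6_general {F : Type*} [Field F]
    {n : ℕ}
    (lam : Fin n → F) (hlam : ∀ i, lam i ≠ 0)
    (σ : MvPolynomial (Fin n) F ≃ₐ[F] MvPolynomial (Fin n) F)
    (hσ : ∀ i, σ (X i) = C (lam i) * X i)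
    (m : Fin n →₀ ℕ) (p q : MvPolynomial (Fin n) F)
    (hpm : coeff m p = 1) (hqm : coeff m q = 1) :
    Spr σ p q = ⋂ v ∈ (p.support ∪ q.support).erase m,
      Spr σ (monomial m (1 : F) + monomial v (coeff v p))
            (monomial m (1 : F) + monomial v (coeff v q)) := by
  let w (v : Fin n →₀ ℕ) : Fˣ := Units.mk0 (v.prod fun i e => lam i ^ e)
    (Finsupp.prod_ne_zero_iff.mpr fun i _ => pow_ne_zero _ (hlam i))
  have hcoeff : ∀ v f, coeff v (σ f) = w v * coeff v f :=
    coeff_apply_of_apply_X_eq_C_mul_X σ.toAlgHom lam hσ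
  ext k
  simp only [Set.mem_iInter, mem_Spr_iff_of_coeff_eq_one hcoeff hpm hqm]
  refine ⟨fun h v hv => (mem_Spr_binomial_iff hcoeff (Finset.ne_of_mem_erase hv) _ _).mpr (h v),
    fun h v => ?_⟩
  by_cases hvm : v = m
  · rw [hvm, hpm, hqm]
  by_cases hv : v ∈ p.support ∪ q.support
  · exact (mem_Spr_binomial_iff hcoeff hvm _ _).mp (h v (Finset.mem_erase.mpr ⟨hvm, hv⟩))
  · obtain ⟨hp, hq⟩ := Finset.notMem_union.mp hv
    rw [notMem_support_iff.mp hp, notMem_support_iff.mp hq, mul_zero, mul_zero]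

/-- Let `σ` be the `F`-algebra automorphism of `F[α₁,…,αₙ]` with
`σ(αᵢ) = λᵢ αᵢ` (all `λᵢ` nonzero). Let `p, q` have coefficient `1` at the monomial `α^m`
and suppose every other monomial occurring in `p` or `q` is strictly smaller than `α^m`
in the graded lexicographic order. Then
`Spr_σ(p,q) = ⋂ᵢ Spr_σ(α^m + pᵢ·αⁱ, α^m + qᵢ·αⁱ)`, the intersection ranging over all
multi-indices `i ≠ m` at which `p` or `q` has a nonzero coefficient (an empty
intersection being all of ℤ). -/
theorem stmt_6 {F : Type*} [Field F] [Algebra F (AlgebraicClosure ℚ)]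
    {n : ℕ} (hn : 1 ≤ n)
    (lam : Fin n → F) (hlam : ∀ i, lam i ≠ 0)
    (σ : MvPolynomial (Fin n) F ≃ₐ[F] MvPolynomial (Fin n) F)
    (hσ : ∀ i, σ (X i) = C (lam i) * X i)
    (m : Fin n →₀ ℕ) (p q : MvPolynomial (Fin n) F)
    (hpm : coeff m p = 1) (hqm : coeff m q = 1)
    (hlt : ∀ v ∈ p.support ∪ q.support, v ≠ m → grlexLt v m) :
    Spr σ p q = ⋂ v ∈ (p.support ∪ q.support).erase m,
      Spr σ (monomial m (1 : F) + monomial v (coeff v p))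
            (monomial m (1 : F) + monomial v (coeff v q)) :=
  stmt_6_general lam hlam σ hσ m p q hpm hqm
end

section
/- Let m, i ∈ ℕ^n with m ≠ i, let p_0, q_0 ∈ F∖{0}, and set p = α^m + p_0·α^i and q = α^m + q_0·α^i. Then for every k ∈ ℤ: k ∈ Spr_σ(p,q) if and only if λ_1^{k(m_1−i_1)}·λ_2^{k(m_2−i_2)}···λ_n^{k(m_n−i_n)} = p_0/q_0. Moreover, in that case the (unique) scalar c ∈ F∖{0} with σ^k(p) = c·q is c = λ_1^{k m_1}···λ_n^{k m_n}. -/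
/-!
`σᵏ` scales each monomial: `σᵏ(α^d) = Λ_d α^d` with `Λ_d = ∏ₜ λₜ^{k dₜ}`. Hence
`σᵏ(p) = Λ_m α^m + Λ_v p₀ α^v`, and since `α^m` and `α^v` are distinct monomials, `σᵏ(p) = c q`
amounts to the two coefficient equations `c = Λ_m` and `Λ_v p₀ = c q₀`. Eliminating `c` leaves
`Λ_m / Λ_v = p₀ / q₀`, which is the stated product.
-/

open MvPolynomial

namespace MvPolynomial

variable {R ι : Type*}

theorem algEquiv_apply_C [CommSemiring R] (e : MvPolynomial ι R ≃ₐ[R] MvPolynomial ι R) (r : R) :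
    e (C r) = C r :=
  e.commutes r

theorem algHom_apply_monomial_of_apply_X [CommSemiring R]
    (f : MvPolynomial ι R →ₐ[R] MvPolynomial ι R) (μ : ι → R)
    (hf : ∀ i, f (X i) = C (μ i) * X i) (d : ι →₀ ℕ) (a : R) :
    f (monomial d a) = monomial d ((d.prod fun i e => μ i ^ e) * a) := by
  simp only [monomial_eq, map_mul, algHom_C, Finsupp.prod, map_prod, map_pow, hf, mul_pow,
    Finset.prod_mul_distrib, map_prod, algebraMap_eq]
  ring

theorem monomial_add_monomial_eq_iff [CommSemiring R] {m v : ι →₀ ℕ} (hmv : m ≠ v)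
    (a b a' b' : R) :
    monomial m a + monomial v b = monomial m a' + monomial v b' ↔ a = a' ∧ b = b' := by
  classical
  refine ⟨fun h => ⟨?_, ?_⟩, fun ⟨ha, hb⟩ => ha ▸ hb ▸ rfl⟩
  · simpa [coeff_monomial, hmv, Ne.symm hmv] using congrArg (coeff m) h
  · simpa [coeff_monomial, hmv, Ne.symm hmv] using congrArg (coeff v) h

variable [Field R] {σ : MvPolynomial ι R ≃ₐ[R] MvPolynomial ι R} {lam : ι → R}

theorem mul_apply_X_of_apply_X {τ : MvPolynomial ι R ≃ₐ[R] MvPolynomial ι R} {μ ν : ι → R}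
    (hσ : ∀ i, σ (X i) = C (μ i) * X i) (hτ : ∀ i, τ (X i) = C (ν i) * X i) (i : ι) :
    (σ * τ) (X i) = C (μ i * ν i) * X i := by
  rw [AlgEquiv.mul_apply, hτ, map_mul, hσ, algEquiv_apply_C, ← mul_assoc, ← C_mul, mul_comm (ν i)]

theorem inv_apply_X_of_apply_X (hlam : ∀ i, lam i ≠ 0) (hσ : ∀ i, σ (X i) = C (lam i) * X i)
    (i : ι) : σ⁻¹ (X i) = C (lam i)⁻¹ * X i := by
  rw [AlgEquiv.aut_inv, AlgEquiv.symm_apply_eq, map_mul, hσ, algEquiv_apply_C, ← mul_assoc,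
    ← C_mul, inv_mul_cancel₀ (hlam i), C_1, one_mul]

theorem zpow_apply_X_of_apply_X (hlam : ∀ i, lam i ≠ 0) (hσ : ∀ i, σ (X i) = C (lam i) * X i)
    (k : ℤ) (i : ι) : (σ ^ k) (X i) = C (lam i ^ k) * X i := by
  induction k using Int.induction_on generalizing i with
  | zero => simp
  | succ j ih =>
    rw [zpow_add_one, mul_apply_X_of_apply_X ih hσ, zpow_add_one₀ (hlam i)]
  | pred j ih =>
    rw [zpow_sub_one, mul_apply_X_of_apply_X ih (inv_apply_X_of_apply_X hlam hσ),
      zpow_sub_one₀ (hlam i)]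

theorem zpow_apply_monomial_of_apply_X [Fintype ι] (hlam : ∀ i, lam i ≠ 0)
    (hσ : ∀ i, σ (X i) = C (lam i) * X i) (k : ℤ) (d : ι →₀ ℕ) (a : R) :
    (σ ^ k) (monomial d a) = monomial d ((∏ i, lam i ^ (k * (d i : ℤ))) * a) := by
  rw [← AlgEquiv.coe_toAlgHom,
    algHom_apply_monomial_of_apply_X _ _ (zpow_apply_X_of_apply_X hlam hσ k) d a,
    Finsupp.prod_fintype _ _ fun i => pow_zero _]
  simp_rw [zpow_mul, zpow_natCast]

end MvPolynomial

theorem stmt_7_general {F : Type*} [Field F]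
    {n : ℕ}
    (lam : Fin n → F) (hlam : ∀ i, lam i ≠ 0)
    (σ : MvPolynomial (Fin n) F ≃ₐ[F] MvPolynomial (Fin n) F)
    (hσ : ∀ i, σ (X i) = C (lam i) * X i)
    (m v : Fin n →₀ ℕ) (hmv : m ≠ v)
    (p₀ q₀ : F) (hq₀ : q₀ ≠ 0)
    (k : ℤ) :
    (k ∈ Spr σ (monomial m (1 : F) + monomial v p₀)
               (monomial m (1 : F) + monomial v q₀) ↔
      (∏ t, lam t ^ (k * ((m t : ℤ) - (v t : ℤ)))) = p₀ / q₀) ∧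
    (∀ c : F, c ≠ 0 →
      (σ ^ k) (monomial m (1 : F) + monomial v p₀) =
        C c * (monomial m (1 : F) + monomial v q₀) →
      c = ∏ t, lam t ^ (k * (m t : ℤ))) := by
  set Λ : (Fin n →₀ ℕ) → F := fun d => ∏ t, lam t ^ (k * (d t : ℤ))
  have hΛ (d : Fin n →₀ ℕ) : Λ d ≠ 0 :=
    Finset.prod_ne_zero_iff.2 fun t _ => zpow_ne_zero _ (hlam t)
  have hquot : ∏ t, lam t ^ (k * ((m t : ℤ) - (v t : ℤ))) = Λ m / Λ v := by
    simp only [Λ, ← Finset.prod_div_distrib, ← zpow_sub₀ (hlam _), mul_sub]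
  have hσk (c : F) : (σ ^ k) (monomial m 1 + monomial v p₀) = C c * (monomial m 1 + monomial v q₀)
      ↔ Λ m = c ∧ Λ v * p₀ = c * q₀ := by
    rw [map_add, zpow_apply_monomial_of_apply_X hlam hσ, zpow_apply_monomial_of_apply_X hlam hσ,
      mul_add, C_mul_monomial, C_mul_monomial, mul_one, mul_one, monomial_add_monomial_eq_iff hmv]
  have hspr : k ∈ Spr σ (monomial m 1 + monomial v p₀) (monomial m 1 + monomial v q₀) ↔
      Λ v * p₀ = Λ m * q₀ := by
    refine ⟨fun ⟨c, _, h⟩ => ?_, fun h => ⟨Λ m, hΛ m, (hσk _).2 ⟨rfl, h⟩⟩⟩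
    obtain ⟨rfl, h⟩ := (hσk c).1 h
    exact h
  refine ⟨hspr.trans ?_, fun c _ h => ((hσk c).1 h).1.symm⟩
  rw [hquot, div_eq_div_iff (hΛ v) hq₀, mul_comm p₀]
  exact eq_comm

/-- Let `σ` be the `F`-algebra automorphism of `F[α₁,…,αₙ]` with
`σ(αᵢ) = λᵢ αᵢ` (all `λᵢ` nonzero). Let `m ≠ v` be multi-indices, `p₀, q₀ ∈ F∖{0}`, and
`p = α^m + p₀·α^v`, `q = α^m + q₀·α^v`. Then for every `k ∈ ℤ`: `k ∈ Spr_σ(p,q)` iff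
`∏ₜ λₜ^{k(mₜ−vₜ)} = p₀/q₀`; moreover in that case the unique scalar `c` with
`σᵏ(p) = c·q` is `c = ∏ₜ λₜ^{k·mₜ}`. -/
theorem stmt_7 {F : Type*} [Field F] [Algebra F (AlgebraicClosure ℚ)]
    {n : ℕ} (hn : 1 ≤ n)
    (lam : Fin n → F) (hlam : ∀ i, lam i ≠ 0)
    (σ : MvPolynomial (Fin n) F ≃ₐ[F] MvPolynomial (Fin n) F)
    (hσ : ∀ i, σ (X i) = C (lam i) * X i)
    (m v : Fin n →₀ ℕ) (hmv : m ≠ v)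
    (p₀ q₀ : F) (hp₀ : p₀ ≠ 0) (hq₀ : q₀ ≠ 0)
    (k : ℤ) :
    (k ∈ Spr σ (monomial m (1 : F) + monomial v p₀)
               (monomial m (1 : F) + monomial v q₀) ↔
      (∏ t, lam t ^ (k * ((m t : ℤ) - (v t : ℤ)))) = p₀ / q₀) ∧
    (∀ c : F, c ≠ 0 →
      (σ ^ k) (monomial m (1 : F) + monomial v p₀) =
        C c * (monomial m (1 : F) + monomial v q₀) →
      c = ∏ t, lam t ^ (k * (m t : ℤ))) :=
  stmt_7_general lam hlam σ hσ m v hmv p₀ q₀ hq₀ k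
end

section
/- Let c ∈ F∖{0}, j ≥ 1 an integer, d ∈ K with d ≠ 0, and let L ⊂ ℤ be a finite set with elements a_ℓ ∈ K for ℓ ∈ L. Set f = Σ_{ℓ∈L} a_ℓ / σ^ℓ(d)^j and a = Σ_{ℓ∈L} c^{−ℓ}·σ^{−ℓ}(a_ℓ). Then there exists g ∈ K such that f = (c·σ(g) − g) + a/d^j; in particular, f − a/d^j is cσ-summable in K. -/
/-!
Since `c σ(c^k σ^k h) - c^k σ^k h = c^(k+1) σ^(k+1) h - c^k σ^k h`, the elements `h` and
`c^k σ^k h` differ by a telescoping sum of `cσ`-differences, for every `k ∈ ℤ`. Taking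
`h = a_ℓ / σ^ℓ(d)^j` and `k = -ℓ` turns `h` into `c^(-ℓ) σ^(-ℓ)(a_ℓ) / d^j`, and the
`cσ`-summable elements form an `F`-subspace, so the summands can be added up.
-/

open MvPolynomial

section TwistedDifference

variable {F A : Type*} [Field F] [Ring A] [Algebra F A]

/-- Its range is the space of `cσ`-summable elements. -/
def twistedDiff (c : F) (σ : A ≃ₐ[F] A) : A →ₗ[F] A :=
  c • σ.toLinearMap - LinearMap.id

theorem twistedDiff_apply (c : F) (σ : A ≃ₐ[F] A) (g : A) :
    twistedDiff c σ g = algebraMap F A c * σ g - g := by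
  simp [twistedDiff, Algebra.smul_def]

variable {c : F} (hc : c ≠ 0) (σ : A ≃ₐ[F] A)
include hc

theorem twistedDiff_zpow_smul (k : ℤ) (h : A) :
    twistedDiff c σ (c ^ k • (σ ^ k) h) = c ^ (k + 1) • (σ ^ (k + 1)) h - c ^ k • (σ ^ k) h := by
  rw [twistedDiff_apply, ← Algebra.smul_def, map_smul, smul_smul, add_comm k 1,
    zpow_one_add₀ hc, zpow_one_add, AlgEquiv.mul_apply]

theorem sub_zpow_smul_mem_range_twistedDiff (k : ℤ) (h : A) :
    h - c ^ k • (σ ^ k) h ∈ LinearMap.range (twistedDiff c σ) := by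
  induction k using Int.induction_on with
  | zero => simp
  | succ k ih =>
    convert sub_mem ih (LinearMap.mem_range_self _ (c ^ (k : ℤ) • (σ ^ (k : ℤ)) h)) using 1
    rw [twistedDiff_zpow_smul hc]; abel
  | pred k ih =>
    convert add_mem ih (LinearMap.mem_range_self _ (c ^ (-k - 1 : ℤ) • (σ ^ (-k - 1 : ℤ)) h))
      using 1
    rw [twistedDiff_zpow_smul hc, sub_add_cancel]; abel

end TwistedDifference

theorem zpow_smul_zpow_div_pow {F E : Type*} [Field F] [Field E] [Algebra F E] (c : F)
    (σ : E ≃ₐ[F] E) (ℓ : ℤ) (j : ℕ) (a d : E) :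
    c ^ (-ℓ) • (σ ^ (-ℓ)) (a / ((σ ^ ℓ) d) ^ j) =
      algebraMap F E (c ^ (-ℓ)) * (σ ^ (-ℓ)) a / d ^ j := by
  rw [map_div₀, map_pow, ← AlgEquiv.mul_apply, ← zpow_add, neg_add_cancel, zpow_zero,
    AlgEquiv.one_apply, Algebra.smul_def, mul_div_assoc]

theorem stmt_10_general {F : Type*} [Field F]
    {n : ℕ}
    (σ : K F n ≃ₐ[F] K F n)
    (c : F) (hc : c ≠ 0) (j : ℕ)
    (d : K F n)
    (L : Finset ℤ) (a : ℤ → K F n) :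
    ∃ g : K F n,
      (∑ ℓ ∈ L, a ℓ / ((σ ^ ℓ) d) ^ j) =
        (algebraMap F (K F n) c * σ g - g) +
          (∑ ℓ ∈ L, algebraMap F (K F n) (c ^ (-ℓ)) * (σ ^ (-ℓ)) (a ℓ)) / d ^ j := by
  have hmem : ∑ ℓ ∈ L, (a ℓ / ((σ ^ ℓ) d) ^ j
      - algebraMap F (K F n) (c ^ (-ℓ)) * (σ ^ (-ℓ)) (a ℓ) / d ^ j) ∈
        LinearMap.range (twistedDiff c σ) :=
    Submodule.sum_mem _ fun ℓ _ => by
      simpa only [zpow_smul_zpow_div_pow] using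
        sub_zpow_smul_mem_range_twistedDiff hc σ (-ℓ) (a ℓ / ((σ ^ ℓ) d) ^ j)
  obtain ⟨g, hg⟩ := hmem
  refine ⟨g, ?_⟩
  rw [← twistedDiff_apply, hg, Finset.sum_sub_distrib, Finset.sum_div, sub_add_cancel]

/-- Let `σ` be the `F`-algebra automorphism of `K = F(α₁,…,αₙ)` with
`σ(αᵢ) = λᵢ αᵢ` (all `λᵢ` nonzero). Let `c ∈ F∖{0}`, `j ≥ 1`, `d ∈ K∖{0}`, `L ⊂ ℤ` finite
and `a_ℓ ∈ K` for `ℓ ∈ L`. Set `f = ∑_{ℓ∈L} a_ℓ/σ^ℓ(d)^j` and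
`a = ∑_{ℓ∈L} c^{−ℓ}·σ^{−ℓ}(a_ℓ)`. Then there exists `g ∈ K` with
`f = (c·σ(g) − g) + a/d^j`; in particular `f − a/d^j` is `cσ`-summable in `K`. -/
theorem stmt_10 {F : Type*} [Field F] [Algebra F (AlgebraicClosure ℚ)]
    {n : ℕ} (hn : 1 ≤ n)
    (lam : Fin n → F) (hlam : ∀ i, lam i ≠ 0)
    (σ : K F n ≃ₐ[F] K F n)
    (hσ : ∀ i, σ (α i) = algebraMap F (K F n) (lam i) * α i)
    (c : F) (hc : c ≠ 0) (j : ℕ) (hj : 1 ≤ j)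
    (d : K F n) (hd : d ≠ 0)
    (L : Finset ℤ) (a : ℤ → K F n) :
    ∃ g : K F n,
      (∑ ℓ ∈ L, a ℓ / ((σ ^ ℓ) d) ^ j) =
        (algebraMap F (K F n) c * σ g - g) +
          (∑ ℓ ∈ L, algebraMap F (K F n) (c ^ (-ℓ)) * (σ ^ (-ℓ)) (a ℓ)) / d ^ j :=
  stmt_10_general σ c hc j d L a
end

section
/- Assume n ≥ 2. Let ε ∈ F∖{0}, let k ≥ 1 be an integer, and let a = Σ_{i=0}^{ℓ} a_i·α_n^i ∈ F'[α_n] with coefficients a_i ∈ F'. Then there exists g ∈ F'[α_n] such that a = ε·σ^k(g) − g if and only if for every i with 0 ≤ i ≤ ℓ there exists h_i ∈ F' such that a_i = ε·λ_n^{k i}·σ^k(h_i) − h_i. -/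
open MvPolynomial

/-- `F' = F(α₁,…,α_{n−1})`, realized as the subfield of `K F (n+1)` generated by (the image
of) `F` together with all the variables except the last one. -/
noncomputable def Fprime (F : Type*) [Field F] (n : ℕ) : Subfield (K F (n + 1)) :=
  Subfield.closure (Set.range (algebraMap F (K F (n + 1))) ∪
    Set.range fun t : Fin n => (α t.castSucc : K F (n + 1)))

/-- If a polynomial expression `∑ₜ rename castSucc (p t) · X(last)^t` vanishes in
`MvPolynomial (Fin (n+1)) F`, then all the `p t` vanish. -/
lemma extract_aux {F : Type*} [Field F] {n : ℕ} (m : ℕ) (p : ℕ → MvPolynomial (Fin n) F)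
    (h : ∑ t ∈ Finset.range m, (rename Fin.castSucc (p t)) *
        (X (Fin.last n) : MvPolynomial (Fin (n+1)) F) ^ t = 0) :
    ∀ t < m, p t = 0 := by
  have hC : ∀ q : MvPolynomial (Fin n) F,
      MvPolynomial.finSuccEquiv F n (rename Fin.succ q) = Polynomial.C q := by
    intro q
    have h' : ((MvPolynomial.finSuccEquiv F n : MvPolynomial (Fin (n+1)) F →ₐ[F] _).comp
        (rename Fin.succ) : MvPolynomial (Fin n) F →ₐ[F] _)
        = Polynomial.CAlgHom := algHom_ext fun j => by
          simp [MvPolynomial.finSuccEquiv_X_succ, Polynomial.CAlgHom]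
    exact DFunLike.congr_fun h' q
  have h1 := congrArg (rename (finRotate (n+1))) h
  simp only [map_sum, map_mul, map_pow, rename_X, map_zero, rename_rename, finRotate_last] at h1
  have h1' : ∑ t ∈ Finset.range m, (rename Fin.succ (p t)) *
      (X (0 : Fin (n+1)) : MvPolynomial (Fin (n+1)) F) ^ t = 0 := by
    rw [← h1]
    refine Finset.sum_congr rfl fun t _ => ?_
    congr 1
    refine congrFun (congrArg _ (congrArg _ ?_)) _
    exact funext fun i => by simp [Fin.coeSucc_eq_succ]
  have h2 := congrArg (MvPolynomial.finSuccEquiv F n) h1'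
  simp only [map_sum, map_mul, map_pow, MvPolynomial.finSuccEquiv_X_zero, map_zero, hC] at h2
  intro t ht
  have h3 := congrArg (fun P => Polynomial.coeff P t) h2
  simp only [Polynomial.finset_sum_coeff, Polynomial.coeff_C_mul, Polynomial.coeff_X_pow,
    Polynomial.coeff_zero, mul_ite, mul_one, mul_zero] at h3
  rwa [Finset.sum_ite_eq (Finset.range m) t p, if_pos (Finset.mem_range.2 ht)] at h3

set_option maxHeartbeats 1000000 in
/-- The powers of `α (last n)` are linearly independent over `F'`. -/
lemma coeffs_zero {F : Type*} [Field F] {n : ℕ} (m : ℕ) (c : ℕ → K F (n+1))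
    (hc : ∀ t, c t ∈ Fprime F n)
    (h0 : ∑ t ∈ Finset.range m, c t * (α (Fin.last n) : K F (n+1)) ^ t = 0) :
    ∀ t < m, c t = 0 := by
  classical
  set A : MvPolynomial (Fin n) F →ₐ[F] K F (n+1) :=
    aeval (fun t : Fin n => (α t.castSucc : K F (n+1))) with hA
  have hAeq : ∀ q : MvPolynomial (Fin n) F,
      A q = algebraMap (MvPolynomial (Fin (n+1)) F) (K F (n+1)) (rename Fin.castSucc q) := by
    intro q
    have h1 : ∀ p : MvPolynomial (Fin (n+1)) F,
        aeval (α (F:=F) (n:=n+1)) p = algebraMap _ (K F (n+1)) p := by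
      intro p
      have h' : (aeval (α (F:=F) (n:=n+1)) : MvPolynomial (Fin (n+1)) F →ₐ[F] K F (n+1))
          = IsScalarTower.toAlgHom F _ _ := algHom_ext fun i => by simp [α]
      exact DFunLike.congr_fun h' p
    rw [← h1, aeval_rename]
    rfl
  have hinj : Function.Injective
      (fun q : MvPolynomial (Fin (n+1)) F => algebraMap _ (K F (n+1)) q) :=
    IsFractionRing.injective _ _
  have hrep : ∀ t, ∃ r s : MvPolynomial (Fin n) F, A s ≠ 0 ∧ c t = A r / A s := by
    intro t
    obtain ⟨r, s, hrs⟩ := (IntermediateField.mem_adjoin_range_iff F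
      (fun t : Fin n => (α t.castSucc : K F (n+1))) (c t)).mp (hc t)
    by_cases hs : A s = 0
    · exact ⟨0, 1, by simp, by simp [hrs, ← hA, hs]⟩
    · exact ⟨r, s, hs, hrs⟩
  choose r s hs hcs using hrep
  have hkey : ∀ t ∈ Finset.range m,
      c t * A (∏ u ∈ Finset.range m, s u)
        = A (r t * ∏ u ∈ (Finset.range m).erase t, s u) := by
    intro t ht
    rw [← Finset.mul_prod_erase _ _ ht, map_mul, hcs t, ← mul_assoc,
      div_mul_cancel₀ _ (hs t), map_mul]
  have hsum : ∑ t ∈ Finset.range m,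
      A (r t * ∏ u ∈ (Finset.range m).erase t, s u) * (α (Fin.last n) : K F (n+1)) ^ t = 0 := by
    have := congrArg (· * A (∏ u ∈ Finset.range m, s u)) h0
    simp only [Finset.sum_mul, zero_mul] at this
    rw [← this]
    refine Finset.sum_congr rfl fun t ht => ?_
    rw [← hkey t ht]; ring
  have hQ : algebraMap (MvPolynomial (Fin (n+1)) F) (K F (n+1))
      (∑ t ∈ Finset.range m, (rename Fin.castSucc (r t * ∏ u ∈ (Finset.range m).erase t, s u)) *
        (X (Fin.last n)) ^ t) = 0 := by
    rw [map_sum]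
    rw [← hsum]
    refine Finset.sum_congr rfl fun t _ => ?_
    rw [map_mul, map_pow, ← hAeq]
    rfl
  have hz : (algebraMap (MvPolynomial (Fin (n+1)) F) (K F (n+1))) 0 = 0 := map_zero _
  have hQ0 : (∑ t ∈ Finset.range m, (rename Fin.castSucc
      (r t * ∏ u ∈ (Finset.range m).erase t, s u)) *
        (X (Fin.last n) : MvPolynomial (Fin (n+1)) F) ^ t) = 0 :=
    hinj (hQ.trans hz.symm)
  have hp := extract_aux m _ hQ0
  intro t ht
  have hr0 : r t = 0 := by
    have := hp t ht
    rcases mul_eq_zero.mp this with h | h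
    · exact h
    · exact absurd h (by
        refine Finset.prod_ne_zero_iff.mpr fun u _ => fun h0 => hs u ?_
        rw [h0, map_zero])
  rw [hcs t, hr0, map_zero, zero_div]

lemma algebraMap_mem_Fprime {F : Type*} [Field F] {n : ℕ} (x : F) :
    algebraMap F (K F (n+1)) x ∈ Fprime F n :=
  Subfield.subset_closure (Or.inl ⟨x, rfl⟩)

lemma sigma_maps_Fprime {F : Type*} [Field F] {n : ℕ}
    (σ : K F (n + 1) ≃ₐ[F] K F (n + 1)) (lam : Fin (n + 1) → F)
    (hσ : ∀ i, σ (α i) = algebraMap F (K F (n + 1)) (lam i) * α i)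
    {x : K F (n+1)} (hx : x ∈ Fprime F n) : σ x ∈ Fprime F n := by
  have hle : Fprime F n ≤ Subfield.comap (σ : K F (n+1) →+* K F (n+1)) (Fprime F n) := by
    refine Subfield.closure_le.mpr ?_
    rintro _ (⟨y, rfl⟩ | ⟨t, rfl⟩) <;>
      simp only [SetLike.mem_coe, Subfield.mem_comap, RingHom.coe_coe]
    · rw [σ.commutes]; exact algebraMap_mem_Fprime y
    · rw [hσ]
      exact Subfield.mul_mem _ (algebraMap_mem_Fprime _)
        (Subfield.subset_closure (Or.inr ⟨t, rfl⟩))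
  exact hle hx

lemma sigma_pow_maps_Fprime {F : Type*} [Field F] {n : ℕ}
    (σ : K F (n + 1) ≃ₐ[F] K F (n + 1)) (lam : Fin (n + 1) → F)
    (hσ : ∀ i, σ (α i) = algebraMap F (K F (n + 1)) (lam i) * α i) (k : ℕ)
    {x : K F (n+1)} (hx : x ∈ Fprime F n) : (σ ^ k) x ∈ Fprime F n := by
  induction k with
  | zero => simpa using hx
  | succ j ih =>
      rw [pow_succ', AlgEquiv.mul_apply]
      exact sigma_maps_Fprime σ lam hσ ih

lemma sigma_pow_alpha {F : Type*} [Field F] {n : ℕ}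
    (σ : K F (n + 1) ≃ₐ[F] K F (n + 1)) (lam : Fin (n + 1) → F)
    (hσ : ∀ i, σ (α i) = algebraMap F (K F (n + 1)) (lam i) * α i) (k : ℕ) (i : Fin (n+1)) :
    (σ ^ k) (α i) = algebraMap F (K F (n + 1)) (lam i ^ k) * α i := by
  induction k with
  | zero => simp
  | succ j ih =>
      rw [pow_succ', AlgEquiv.mul_apply, ih, map_mul, σ.commutes, hσ, pow_succ, map_mul]
      ring

lemma expansion {F : Type*} [Field F] {n : ℕ}
    (σ : K F (n + 1) ≃ₐ[F] K F (n + 1)) (lam : Fin (n + 1) → F)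
    (hσ : ∀ i, σ (α i) = algebraMap F (K F (n + 1)) (lam i) * α i) (k : ℕ) (ε : F)
    (m : ℕ) (c : ℕ → K F (n+1)) :
    algebraMap F (K F (n+1)) ε *
        (σ ^ k) (∑ t ∈ Finset.range m, c t * (α (Fin.last n) : K F (n+1)) ^ t) -
      (∑ t ∈ Finset.range m, c t * (α (Fin.last n) : K F (n+1)) ^ t)
    = ∑ t ∈ Finset.range m,
        (algebraMap F (K F (n+1)) (ε * lam (Fin.last n) ^ (k * t)) * ((σ ^ k) (c t)) - c t) *
          (α (Fin.last n) : K F (n+1)) ^ t := by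
  rw [map_sum, Finset.mul_sum, ← Finset.sum_sub_distrib]
  refine Finset.sum_congr rfl fun t _ => ?_
  rw [map_mul, map_pow, sigma_pow_alpha σ lam hσ, mul_pow, ← map_pow, ← pow_mul, map_mul]
  ring

set_option maxHeartbeats 1000000 in
/-- Let `n + 1 ≥ 2` be the number of variables and `σ` the `F`-algebra
automorphism of `K = F(α₁,…,α_{n+1})` with `σ(αᵢ) = λᵢ αᵢ` (all `λᵢ` nonzero). Let
`ε ∈ F∖{0}`, `k ≥ 1`, and `a = ∑_{i=0}^{ℓ} aᵢ·αlast^i` with coefficients `aᵢ ∈ F'`. Then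
there exists a polynomial `g ∈ F'[αlast]` (i.e. `g = ∑_{t<m} gC(t)·αlast^t` with
coefficients in `F'`) with `a = ε·σᵏ(g) − g` iff for every `i ≤ ℓ` there exists `hᵢ ∈ F'`
with `aᵢ = ε·λlast^{k·i}·σᵏ(hᵢ) − hᵢ`. -/
theorem stmt_13 {F : Type*} [Field F] [Algebra F (AlgebraicClosure ℚ)]
    {n : ℕ} (hn : 1 ≤ n)
    (lam : Fin (n + 1) → F) (hlam : ∀ i, lam i ≠ 0)
    (σ : K F (n + 1) ≃ₐ[F] K F (n + 1))
    (hσ : ∀ i, σ (α i) = algebraMap F (K F (n + 1)) (lam i) * α i)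
    (ε : F) (hε : ε ≠ 0) (k : ℕ) (hk : 1 ≤ k)
    (ℓ : ℕ) (aC : ℕ → K F (n + 1)) (haC : ∀ i, aC i ∈ Fprime F n)
    (a : K F (n + 1))
    (ha : a = ∑ i ∈ Finset.range (ℓ + 1), aC i * (α (Fin.last n) : K F (n + 1)) ^ i) :
    (∃ (m : ℕ) (gC : ℕ → K F (n + 1)), (∀ t, gC t ∈ Fprime F n) ∧
        a = algebraMap F (K F (n + 1)) ε *
              (σ ^ (k : ℤ)) (∑ t ∈ Finset.range m,
                gC t * (α (Fin.last n) : K F (n + 1)) ^ t) -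
            (∑ t ∈ Finset.range m, gC t * (α (Fin.last n) : K F (n + 1)) ^ t)) ↔
    (∀ i ≤ ℓ, ∃ h ∈ Fprime F n,
        aC i = algebraMap F (K F (n + 1)) (ε * lam (Fin.last n) ^ (k * i)) *
            (σ ^ (k : ℤ)) h - h) := by
  classical
  rw [zpow_natCast σ k]
  constructor
  · rintro ⟨m, gC, hgC, heq⟩
    intro i hi
    set β := (α (Fin.last n) : K F (n+1)) with hβ
    set M := max (ℓ + 1) m with hM
    set D : ℕ → K F (n+1) := fun t =>
      algebraMap F (K F (n+1)) (ε * lam (Fin.last n) ^ (k * t)) * ((σ ^ k) (gC t)) - gC t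
      with hD
    set c : ℕ → K F (n+1) := fun t =>
      (if t ≤ ℓ then aC t else 0) - (if t < m then D t else 0) with hc
    have hA : ∑ t ∈ Finset.range M, (if t ≤ ℓ then aC t else 0) * β ^ t = a := by
      rw [ha, ← Finset.sum_subset (Finset.range_subset_range.2 (le_max_left (ℓ+1) m))]
      · refine Finset.sum_congr rfl fun t ht => ?_
        rw [if_pos (Nat.lt_succ_iff.mp (Finset.mem_range.mp ht))]
      · intro t _ ht
        rw [if_neg (fun h => ht (Finset.mem_range.2 (Nat.lt_succ_of_le h))), zero_mul]
    have hB : ∑ t ∈ Finset.range M, (if t < m then D t else 0) * β ^ t = a := by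
      rw [heq, expansion σ lam hσ k ε m gC,
        ← Finset.sum_subset (Finset.range_subset_range.2 (le_max_right (ℓ+1) m))]
      · exact Finset.sum_congr rfl fun t ht => by rw [if_pos (Finset.mem_range.mp ht)]
      · intro t _ ht
        rw [if_neg (fun h => ht (Finset.mem_range.2 h)), zero_mul]
    have hsum0 : ∑ t ∈ Finset.range M, c t * β ^ t = 0 := by
      simp only [hc, sub_mul]
      rw [Finset.sum_sub_distrib, hA, hB, sub_self]
    have hcmem : ∀ t, c t ∈ Fprime F n := by
      intro t
      refine Subfield.sub_mem _ ?_ ?_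
      · split_ifs
        · exact haC t
        · exact Subfield.zero_mem _
      · split_ifs
        · exact Subfield.sub_mem _
            (Subfield.mul_mem _ (algebraMap_mem_Fprime _)
              (sigma_pow_maps_Fprime σ lam hσ k (hgC t)))
            (hgC t)
        · exact Subfield.zero_mem _
    have hiM : i < M := lt_of_lt_of_le (Nat.lt_succ_of_le hi) (le_max_left _ _)
    have hci : c i = 0 := coeffs_zero M c hcmem hsum0 i hiM
    rw [hc] at hci
    simp only [sub_eq_zero, if_pos hi] at hci
    by_cases him : i < m
    · rw [if_pos him] at hci
      exact ⟨gC i, hgC i, hci⟩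
    · rw [if_neg him] at hci
      refine ⟨0, Subfield.zero_mem _, ?_⟩
      rw [hci, map_zero, mul_zero, sub_zero]
  · intro hyp
    choose h hmem heq using hyp
    set gC : ℕ → K F (n+1) := fun t => if ht : t ≤ ℓ then h t ht else 0 with hgC
    refine ⟨ℓ + 1, gC, ?_, ?_⟩
    · intro t
      by_cases ht : t ≤ ℓ
      · simpa only [hgC, dif_pos ht] using hmem t ht
      · simp only [hgC, dif_neg ht]; exact Subfield.zero_mem _
    · rw [expansion σ lam hσ k ε (ℓ+1) gC, ha]
      refine Finset.sum_congr rfl fun t ht => ?_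
      have ht' : t ≤ ℓ := Nat.lt_succ_iff.mp (Finset.mem_range.mp ht)
      congr 1
      simp only [hgC, dif_pos ht']
      exact heq t ht'
end
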